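/- Let (ξ_n)_{n∈ℤ} be a stationary Markov chain and f ∈ L²_0(π). Then the sequence (‖E(S_n|ξ_n)‖)_{n≥1} is subadditive: for all positive integers m and n, ‖E(S_{n+m}|ξ_{n+m})‖ ≤ ‖E(S_n|ξ_n)‖ + ‖E(S_m|ξ_m)‖. -/

import Mathlib

open MeasureTheory ProbabilityTheory Filter
open scoped ENNReal NNReal Topology

noncomputable section

/-- The σ-algebra generated by the random variables `ξ k`, `k ∈ I`. -/
def sigmaOf {Ω S : Type*} [MeasurableSpace S] (ξ : ℤ → Ω → S) (I : Set ℤ) :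
    MeasurableSpace Ω :=
  ⨆ k ∈ I, MeasurableSpace.comap (ξ k) inferInstance

/-- The σ-algebra generated by the pair `(ξ i, ξ j)`. -/
def pairSigma {Ω S : Type*} [MeasurableSpace S] (ξ : ℤ → Ω → S) (i j : ℤ) :
    MeasurableSpace Ω :=
  MeasurableSpace.comap (ξ i) inferInstance ⊔ MeasurableSpace.comap (ξ j) inferInstance

/-- Conditional independence of the σ-algebras `m₁` and `m₂` given `m'`. -/
def CondIndepGiven {Ω : Type*} [MeasurableSpace Ω] (μ : Measure Ω)
    (m' m₁ m₂ : MeasurableSpace Ω) : Prop :=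
  ∀ A B : Set Ω, MeasurableSet[m₁] A → MeasurableSet[m₂] B →
    μ[(A ∩ B).indicator (fun _ => (1 : ℝ)) | m'] =ᵐ[μ]
      fun ω => (μ[A.indicator (fun _ => (1 : ℝ)) | m']) ω *
        (μ[B.indicator (fun _ => (1 : ℝ)) | m']) ω

/-- Markov property: for every `n`, the past `σ(ξ k, k ≤ n)` and the future
`σ(ξ k, k ≥ n)` are conditionally independent given `σ(ξ n)`. -/
def IsMarkovChain {Ω S : Type*} [MeasurableSpace Ω] [MeasurableSpace S]
    (μ : Measure Ω) (ξ : ℤ → Ω → S) : Prop :=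
  ∀ n : ℤ, CondIndepGiven μ (MeasurableSpace.comap (ξ n) inferInstance)
    (sigmaOf ξ {k | k ≤ n}) (sigmaOf ξ {k | n ≤ k})

/-- Stationarity: `(ξ (n+1))_n` has the same law as `(ξ n)_n`. -/
def IsStationaryZ {Ω S : Type*} [MeasurableSpace Ω] [MeasurableSpace S]
    (μ : Measure Ω) (ξ : ℤ → Ω → S) : Prop :=
  Measure.map (fun ω (n : ℤ) => ξ (n + 1) ω) μ = Measure.map (fun ω (n : ℤ) => ξ n ω) μ

/-- The left shift on path space `S^ℤ`. -/
def shiftZ {S : Type*} (x : ℤ → S) : ℤ → S := fun n => x (n + 1)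

/-- Total ergodicity: every iterate of the shift is ergodic for the law of the chain. -/
def TotallyErgodic {Ω S : Type*} [MeasurableSpace Ω] [MeasurableSpace S]
    (μ : Measure Ω) (ξ : ℤ → Ω → S) : Prop :=
  ∀ k : ℕ, 0 < k → Ergodic (shiftZ^[k]) (Measure.map (fun ω (n : ℤ) => ξ n ω) μ)

/-- Partial sums `S_n = f(ξ 1) + ⋯ + f(ξ n)`. -/
def pS {Ω S : Type*} (ξ : ℤ → Ω → S) (f : S → ℝ) (n : ℕ) (ω : Ω) : ℝ :=
  ∑ i ∈ Finset.Icc 1 n, f (ξ (i : ℤ) ω)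

/-- Convergence in distribution (weak convergence of the laws) of real random
variables to the measure `ν`. -/
def TendstoInDistribution {Ω : Type*} [MeasurableSpace Ω] (μ : Measure Ω)
    (Y : ℕ → Ω → ℝ) (ν : Measure ℝ) : Prop :=
  ∀ g : BoundedContinuousFunction ℝ ℝ,
    Tendsto (fun n => ∫ ω, g (Y n ω) ∂μ) atTop (𝓝 (∫ x, g x ∂ν))

/-!
Split `S_{n+m} = S_n + (f(ξ_{n+1}) + ⋯ + f(ξ_{n+m}))` and condition on `ξ_{n+m}`. Since `S_n`
is measurable with respect to the past of time `n`, the Markov property gives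
`E(S_n | ξ_{n+m}) = E(E(S_n | ξ_n) | ξ_{n+m})`, whose norm is at most `‖E(S_n | ξ_n)‖` because
conditional expectation contracts `L²`. By stationarity the shifted block, conditioned on
`ξ_{n+m}`, is distributed as `S_m` conditioned on `ξ_m`, so its norm is `‖E(S_m | ξ_m)‖`.
-/

namespace MeasureTheory

variable {Ω : Type*} {m mP mF mH m0 : MeasurableSpace Ω} {μ : Measure Ω}

lemma setIntegral_eq_integral_mul_indicator_one {s : Set Ω} (hs : MeasurableSet s) (g : Ω → ℝ) :
    ∫ ω in s, g ω ∂μ = ∫ ω, g ω * s.indicator (fun _ => (1 : ℝ)) ω ∂μ := by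
  rw [← integral_indicator hs]
  congr 1
  funext ω
  by_cases hω : ω ∈ s <;> simp [hω]

lemma ae_norm_condExp_indicator_one_le (s : Set Ω) :
    ∀ᵐ ω ∂μ, ‖(μ[s.indicator (fun _ => (1 : ℝ)) | m]) ω‖ ≤ 1 := by
  refine ae_bdd_norm_condExp_of_ae_bdd_norm (Eventually.of_forall fun ω => ?_)
  by_cases hω : ω ∈ s <;> simp [hω]

lemma integral_mul_condExp_of_stronglyMeasurable [IsFiniteMeasure μ]
    (hm : m ≤ m0) {f g : Ω → ℝ} (hg : StronglyMeasurable[m] g)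
    (hgf : Integrable (fun ω => g ω * f ω) μ) (hf : Integrable f μ) :
    ∫ ω, g ω * f ω ∂μ = ∫ ω, g ω * (μ[f | m]) ω ∂μ :=
  (integral_condExp hm).symm.trans
    (integral_congr_ae (condExp_mul_of_stronglyMeasurable_left hg hgf hf))

lemma eLpNorm_condExp_add_le {E : Type*} [NormedAddCommGroup E] [NormedSpace ℝ E] [CompleteSpace E]
    (hm : m ≤ m0) {X Y : Ω → E} (hX : Integrable X μ) (hY : Integrable Y μ) {p : ℝ≥0∞}
    (hp : 1 ≤ p) :
    eLpNorm (μ[X + Y | m]) p μ ≤ eLpNorm (μ[X | m]) p μ + eLpNorm (μ[Y | m]) p μ :=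
  (eLpNorm_congr_ae (condExp_add hX hY m)).trans_le
    (eLpNorm_add_le (stronglyMeasurable_condExp.mono hm).aestronglyMeasurable
      (stronglyMeasurable_condExp.mono hm).aestronglyMeasurable hp)

section CondIndepGiven

variable [IsFiniteMeasure μ]

lemma condExp_indicator_ae_eq_of_condIndepGiven (hP : mP ≤ m0) (hmP : m ≤ mP) (hF : mF ≤ m0)
    (hind : CondIndepGiven μ m mP mF) {B : Set Ω} (hB : MeasurableSet[mF] B) :
    μ[B.indicator (fun _ => (1 : ℝ)) | mP] =ᵐ[μ] μ[B.indicator (fun _ => (1 : ℝ)) | m] := by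
  have hm : m ≤ m0 := hmP.trans hP
  refine (ae_eq_condExp_of_forall_setIntegral_eq hP ((integrable_const (1 : ℝ)).indicator (hF B hB))
    (fun s _ _ => integrable_condExp.integrableOn) (fun s hs _ => ?_)
    (stronglyMeasurable_condExp.mono hmP).aestronglyMeasurable).symm
  have hs0 : MeasurableSet s := hP s hs
  calc ∫ ω in s, (μ[B.indicator (fun _ => (1 : ℝ)) | m]) ω ∂μ
      = ∫ ω, (μ[B.indicator (fun _ => (1 : ℝ)) | m]) ω * s.indicator (fun _ => (1 : ℝ)) ω ∂μ :=
        setIntegral_eq_integral_mul_indicator_one hs0 _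
    _ = ∫ ω, (μ[B.indicator (fun _ => (1 : ℝ)) | m]) ω *
          (μ[s.indicator (fun _ => (1 : ℝ)) | m]) ω ∂μ :=
        integral_mul_condExp_of_stronglyMeasurable hm stronglyMeasurable_condExp
          (((integrable_const (1 : ℝ)).indicator hs0).bdd_mul
            (stronglyMeasurable_condExp.mono hm).aestronglyMeasurable
            (ae_norm_condExp_indicator_one_le B))
          ((integrable_const (1 : ℝ)).indicator hs0)
    _ = ∫ ω, (μ[(s ∩ B).indicator (fun _ => (1 : ℝ)) | m]) ω ∂μ := by
        refine integral_congr_ae ?_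
        filter_upwards [hind s B hs hB] with ω hω
        rw [hω, mul_comm]
    _ = ∫ ω in s, B.indicator (fun _ => (1 : ℝ)) ω ∂μ := by
        rw [integral_condExp hm, ← integral_indicator hs0, Set.indicator_indicator]

lemma setIntegral_condExp_of_condIndepGiven (hP : mP ≤ m0) (hmP : m ≤ mP) (hF : mF ≤ m0)
    (hind : CondIndepGiven μ m mP mF) {X : Ω → ℝ} (hX : Integrable X μ)
    (hXm : StronglyMeasurable[mP] X) {B : Set Ω} (hB : MeasurableSet[mF] B) :
    ∫ ω in B, (μ[X | m]) ω ∂μ = ∫ ω in B, X ω ∂μ := by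
  have hm : m ≤ m0 := hmP.trans hP
  have hB0 : MeasurableSet B := hF B hB
  have hW := ae_norm_condExp_indicator_one_le (μ := μ) (m := m) B
  have hpast : ∀ Y : Ω → ℝ, Integrable Y μ → StronglyMeasurable[mP] Y →
      ∫ ω in B, Y ω ∂μ = ∫ ω, Y ω * (μ[B.indicator (fun _ => (1 : ℝ)) | m]) ω ∂μ := by
    intro Y hY hYm
    rw [setIntegral_eq_integral_mul_indicator_one hB0,
      integral_mul_condExp_of_stronglyMeasurable hP hYm ?_
        ((integrable_const (1 : ℝ)).indicator hB0)]
    · exact integral_congr_ae ((condExp_indicator_ae_eq_of_condIndepGiven hP hmP hF hind hB).mono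
        fun ω hω => congrArg (Y ω * ·) hω)
    · refine (hY.indicator hB0).congr (Eventually.of_forall fun ω => ?_)
      by_cases hω : ω ∈ B <;> simp [hω]
  have hmul : ∫ ω, (μ[B.indicator (fun _ => (1 : ℝ)) | m]) ω * X ω ∂μ
      = ∫ ω, (μ[B.indicator (fun _ => (1 : ℝ)) | m]) ω * (μ[X | m]) ω ∂μ :=
    integral_mul_condExp_of_stronglyMeasurable hm stronglyMeasurable_condExp
      (hX.bdd_mul (stronglyMeasurable_condExp.mono hm).aestronglyMeasurable hW) hX
  rw [hpast X hX hXm, hpast _ integrable_condExp (stronglyMeasurable_condExp.mono hmP)]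
  simpa only [mul_comm] using hmul.symm

/-- Unlike the usual tower property, `m` need not be comparable with `mH`: conditional
independence of `mP` and `mF ≥ mH` given `m` takes the place of the inclusion. -/
lemma condExp_ae_eq_condExp_condExp_of_condIndepGiven (hP : mP ≤ m0)
    (hmP : m ≤ mP) (hF : mF ≤ m0) (hHF : mH ≤ mF) (hind : CondIndepGiven μ m mP mF)
    {X : Ω → ℝ} (hX : Integrable X μ) (hXm : StronglyMeasurable[mP] X) :
    μ[X | mH] =ᵐ[μ] μ[μ[X | m] | mH] := by
  have hH : mH ≤ m0 := hHF.trans hF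
  refine (ae_eq_condExp_of_forall_setIntegral_eq hH hX
    (fun s _ _ => integrable_condExp.integrableOn) (fun s hs _ => ?_)
    stronglyMeasurable_condExp.aestronglyMeasurable).symm
  rw [setIntegral_condExp hH integrable_condExp hs]
  exact setIntegral_condExp_of_condIndepGiven hP hmP hF hind hX hXm (hHF s hs)

end CondIndepGiven

variable [IsFiniteMeasure μ] {β : Type*} {𝒢 mβ : MeasurableSpace β} {T : Ω → β}

lemma condExp_comp_ae_eq (hT : Measurable T) (h𝒢 : 𝒢 ≤ mβ) {g : β → ℝ}
    (hg : Integrable g (μ.map T)) :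
    (μ.map T)[g | 𝒢] ∘ T =ᵐ[μ] μ[g ∘ T | 𝒢.comap T] := by
  have hcond : AEStronglyMeasurable ((μ.map T)[g | 𝒢]) (μ.map T) :=
    (stronglyMeasurable_condExp.mono h𝒢).aestronglyMeasurable
  refine ae_eq_condExp_of_forall_setIntegral_eq ((MeasurableSpace.comap_mono h𝒢).trans hT.comap_le)
    ((integrable_map_measure hg.aestronglyMeasurable hT.aemeasurable).mp hg)
    (fun s _ _ => ((integrable_map_measure hcond hT.aemeasurable).mp
      integrable_condExp).integrableOn) (fun s hs _ => ?_)
    (stronglyMeasurable_condExp.comp_measurable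
      (Measurable.of_comap_le le_rfl)).aestronglyMeasurable
  obtain ⟨t, ht, rfl⟩ := hs
  simp only [Function.comp_apply]
  rw [← setIntegral_map (h𝒢 t ht) hcond hT.aemeasurable, setIntegral_condExp h𝒢 hg ht,
    setIntegral_map (h𝒢 t ht) hg.aestronglyMeasurable hT.aemeasurable]

lemma eLpNorm_condExp_comp (hT : Measurable T) (h𝒢 : 𝒢 ≤ mβ) {g : β → ℝ}
    (hg : Integrable g (μ.map T)) (p : ℝ≥0∞) :
    eLpNorm (μ[g ∘ T | 𝒢.comap T]) p μ = eLpNorm ((μ.map T)[g | 𝒢]) p (μ.map T) := by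
  rw [← eLpNorm_congr_ae (condExp_comp_ae_eq hT h𝒢 hg),
    eLpNorm_map_measure (stronglyMeasurable_condExp.mono h𝒢).aestronglyMeasurable
      hT.aemeasurable]

lemma eLpNorm_condExp_comp_eq_of_identDistrib {T' : Ω → β} (hT : Measurable T)
    (hT' : Measurable T') (hTT' : IdentDistrib T T' μ μ) (h𝒢 : 𝒢 ≤ mβ) {g : β → ℝ}
    (hg : Integrable g (μ.map T')) (p : ℝ≥0∞) :
    eLpNorm (μ[g ∘ T | 𝒢.comap T]) p μ = eLpNorm (μ[g ∘ T' | 𝒢.comap T']) p μ := by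
  rw [eLpNorm_condExp_comp hT h𝒢 (hTT'.map_eq ▸ hg), eLpNorm_condExp_comp hT' h𝒢 hg,
    hTT'.map_eq]

end MeasureTheory

lemma comap_le_sigmaOf {Ω S : Type*} [MeasurableSpace S] {ξ : ℤ → Ω → S} {I : Set ℤ} {k : ℤ}
    (hk : k ∈ I) : MeasurableSpace.comap (ξ k) inferInstance ≤ sigmaOf ξ I :=
  le_biSup (fun k => MeasurableSpace.comap (ξ k) inferInstance) hk

lemma stronglyMeasurable_pS {Ω S : Type*} [MeasurableSpace S] {ξ : ℤ → Ω → S} {f : S → ℝ}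
    (hf : Measurable f) (n : ℕ) :
    StronglyMeasurable[sigmaOf ξ {k | k ≤ n}] (pS ξ f n) :=
  (Finset.measurable_sum _ fun i hi => hf.comp (Measurable.of_comap_le (comap_le_sigmaOf
    (by simpa using (Finset.mem_Icc.mp hi).2)))).stronglyMeasurable

lemma shiftZ_iterate_apply {S : Type*} (n : ℕ) (x : ℤ → S) (i : ℤ) :
    shiftZ^[n] x i = x (i + n) := by
  induction n generalizing x with
  | zero => simp
  | succ k ih =>
    rw [Function.iterate_succ_apply, ih, shiftZ, Nat.cast_succ, add_assoc]

lemma measurable_shiftZ {S : Type*} [MeasurableSpace S] : Measurable (shiftZ (S := S)) :=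
  measurable_pi_lambda _ fun n => measurable_pi_apply (n + 1)

lemma pS_add {Ω S : Type*} (ξ : ℤ → Ω → S) (f : S → ℝ) (n m : ℕ) :
    pS ξ f (n + m) = pS ξ f n + pS (fun k => ξ (k + n)) f m := by
  induction m with
  | zero => funext ω; simp [pS]
  | succ k ih =>
    funext ω
    have h := congrFun ih ω
    simp only [pS, Pi.add_apply] at h ⊢
    rw [← add_assoc, Finset.sum_Icc_succ_top (by omega), Finset.sum_Icc_succ_top (by omega), h,
      add_assoc]
    congr 4
    push_cast
    ring

section MarkovChain

variable {Ω S : Type*} [m0 : MeasurableSpace Ω] [MeasurableSpace S] {μ : Measure Ω}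
  {ξ : ℤ → Ω → S}

lemma sigmaOf_le (hmeas : ∀ n, Measurable (ξ n)) (I : Set ℤ) : sigmaOf ξ I ≤ m0 :=
  iSup₂_le fun k _ => (hmeas k).comap_le

lemma IsMarkovChain.condExp_comap_ae_eq_condExp_condExp [IsFiniteMeasure μ]
    (hmarkov : IsMarkovChain μ ξ) (hmeas : ∀ n, Measurable (ξ n)) {N M : ℤ} (hNM : N ≤ M)
    {X : Ω → ℝ} (hX : Integrable X μ) (hXm : StronglyMeasurable[sigmaOf ξ {k | k ≤ N}] X) :
    μ[X | MeasurableSpace.comap (ξ M) inferInstance] =ᵐ[μ]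
      μ[μ[X | MeasurableSpace.comap (ξ N) inferInstance] |
        MeasurableSpace.comap (ξ M) inferInstance] :=
  condExp_ae_eq_condExp_condExp_of_condIndepGiven (sigmaOf_le hmeas _)
    (comap_le_sigmaOf (show N ∈ {k | k ≤ N} from le_refl N)) (sigmaOf_le hmeas _)
    (comap_le_sigmaOf (show M ∈ {k | N ≤ k} from hNM)) (hmarkov N) hX hXm

lemma IsStationaryZ.identDistrib_shift (hmeas : ∀ n, Measurable (ξ n))
    (hstat : IsStationaryZ μ ξ) (n : ℕ) :
    IdentDistrib (fun ω k => ξ (k + n) ω) (fun ω k => ξ k ω) μ μ where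
  aemeasurable_fst := (measurable_pi_lambda _ fun k => hmeas (k + n)).aemeasurable
  aemeasurable_snd := (measurable_pi_lambda _ hmeas).aemeasurable
  map_eq := by
    have hpath : Measurable (fun ω (k : ℤ) => ξ k ω) := measurable_pi_lambda _ hmeas
    have hshift : MeasurePreserving shiftZ (μ.map fun ω k => ξ k ω) (μ.map fun ω k => ξ k ω) :=
      ⟨measurable_shiftZ, by rw [Measure.map_map measurable_shiftZ hpath]; exact hstat⟩
    rw [← (hshift.iterate n).map_eq, Measure.map_map (measurable_shiftZ.iterate n) hpath]
    congr
    funext ω k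
    rw [Function.comp_apply, shiftZ_iterate_apply]

lemma IsStationaryZ.identDistrib (hmeas : ∀ n, Measurable (ξ n)) (hstat : IsStationaryZ μ ξ)
    (n : ℕ) : IdentDistrib (ξ n) (ξ 0) μ μ := by
  simpa [Function.comp_def] using
    (hstat.identDistrib_shift hmeas n).comp (measurable_pi_apply 0)

lemma eLpNorm_condExp_pS_eq_of_identDistrib [IsFiniteMeasure μ] {ξ' : ℤ → Ω → S}
    (hmeas : ∀ n, Measurable (ξ n)) (hmeas' : ∀ n, Measurable (ξ' n))
    (hξξ' : IdentDistrib (fun ω k => ξ' k ω) (fun ω k => ξ k ω) μ μ) {f : S → ℝ}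
    (hf : Measurable f) {m : ℕ} (hint : Integrable (pS ξ f m) μ) (j : ℤ) (p : ℝ≥0∞) :
    eLpNorm (μ[pS ξ' f m | MeasurableSpace.comap (ξ' j) inferInstance]) p μ
      = eLpNorm (μ[pS ξ f m | MeasurableSpace.comap (ξ j) inferInstance]) p μ := by
  have hpath : Measurable (fun ω (k : ℤ) => ξ k ω) := measurable_pi_lambda _ hmeas
  have hsum : Measurable (fun x : ℤ → S => ∑ i ∈ Finset.Icc 1 m, f (x i)) :=
    Finset.measurable_sum _ fun i _ => hf.comp (measurable_pi_apply _)
  have h := eLpNorm_condExp_comp_eq_of_identDistrib (measurable_pi_lambda _ hmeas') hpath hξξ'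
    (measurable_pi_apply j).comap_le
    ((integrable_map_measure hsum.aestronglyMeasurable hpath.aemeasurable).mpr hint) p
  rwa [MeasurableSpace.comap_comp, MeasurableSpace.comap_comp] at h

end MarkovChain

theorem stmt12_general {Ω S : Type*} [MeasurableSpace Ω] [MeasurableSpace S]
    (μ : Measure Ω) [IsProbabilityMeasure μ] (ξ : ℤ → Ω → S)
    (hmeas : ∀ n, Measurable (ξ n))
    (hstat : IsStationaryZ μ ξ) (hmarkov : IsMarkovChain μ ξ)
    (f : S → ℝ) (hf : Measurable f)
    (hL2 : MemLp (fun ω => f (ξ 0 ω)) 2 μ) :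
    ∀ m n : ℕ, 1 ≤ m → 1 ≤ n →
      eLpNorm (μ[pS ξ f (n + m) | MeasurableSpace.comap (ξ (n + m)) inferInstance]) 2 μ ≤
        eLpNorm (μ[pS ξ f n | MeasurableSpace.comap (ξ n) inferInstance]) 2 μ +
          eLpNorm (μ[pS ξ f m | MeasurableSpace.comap (ξ m) inferInstance]) 2 μ := by
  intro m n _ _
  have hf_int : ∀ i : ℕ, Integrable (fun ω => f (ξ i ω)) μ := fun i =>
    ((hstat.identDistrib hmeas i).comp hf).integrable_iff.mpr (hL2.integrable one_le_two)
  have hsum_int : ∀ k : ℕ, Integrable (pS ξ f k) μ := fun k =>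
    integrable_finsetSum _ fun i _ => hf_int i
  have hshift_int : Integrable (pS (fun k => ξ (k + n)) f m) μ :=
    integrable_finsetSum _ fun i _ => by simpa using hf_int (i + n)
  calc eLpNorm (μ[pS ξ f (n + m) | MeasurableSpace.comap (ξ (n + m)) inferInstance]) 2 μ
      ≤ eLpNorm (μ[pS ξ f n | MeasurableSpace.comap (ξ (n + m)) inferInstance]) 2 μ +
          eLpNorm (μ[pS (fun k => ξ (k + n)) f m |
            MeasurableSpace.comap (ξ (n + m)) inferInstance]) 2 μ := by
        rw [pS_add]
        exact eLpNorm_condExp_add_le (hmeas _).comap_le (hsum_int n) hshift_int one_le_two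
    _ ≤ _ := by
        gcongr ?_ + ?_
        · rw [eLpNorm_congr_ae (hmarkov.condExp_comap_ae_eq_condExp_condExp hmeas (by omega)
            (hsum_int n) (stronglyMeasurable_pS hf n))]
          exact eLpNorm_condExp_le_eLpNorm _ one_le_two
        · rw [add_comm (n : ℤ)]
          exact (eLpNorm_condExp_pS_eq_of_identDistrib hmeas (fun k => hmeas (k + n))
            (hstat.identDistrib_shift hmeas n) hf (hsum_int m) m 2).le

theorem stmt12 {Ω S : Type*} [MeasurableSpace Ω] [MeasurableSpace S]
    (μ : Measure Ω) [IsProbabilityMeasure μ] (ξ : ℤ → Ω → S)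
    (hmeas : ∀ n, Measurable (ξ n))
    (hstat : IsStationaryZ μ ξ) (hmarkov : IsMarkovChain μ ξ)
    (f : S → ℝ) (hf : Measurable f)
    (hmean : ∫ ω, f (ξ 0 ω) ∂μ = 0)
    (hL2 : MemLp (fun ω => f (ξ 0 ω)) 2 μ) :
    ∀ m n : ℕ, 1 ≤ m → 1 ≤ n →
      eLpNorm (μ[pS ξ f (n + m) | MeasurableSpace.comap (ξ (n + m)) inferInstance]) 2 μ ≤
        eLpNorm (μ[pS ξ f n | MeasurableSpace.comap (ξ n) inferInstance]) 2 μ +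
          eLpNorm (μ[pS ξ f m | MeasurableSpace.comap (ξ m) inferInstance]) 2 μ :=
  stmt12_general μ ξ hmeas hstat hmarkov f hf hL2
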